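/- Let u : ℝ → ℝ be of class C⁵, fix x ∈ ℝ, κ ∈ ℝ, α ∈ ℝ, and ν > 0. Define the face-gradient approximation G(h) = ν·(u(x+h) − u(x))/h + (ν·α/(2h))·(uR(u,h) − uL(u,h)). Then G(h) = ν·u'(x) + (ν/2)·u''(x)·h + (ν/8)·(4/3 + α·(κ−1))·u'''(x)·h² + (ν/48)·(2 + 3·α·(κ−1))·u''''(x)·h³ + O(h⁴) as h → 0⁺. -/

import Mathlib

open Asymptotics Filter Set MeasureTheory

noncomputable def uL (κ x : ℝ) (v : ℝ → ℝ) (h : ℝ) : ℝ :=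
  (v x + v (x + h)) / 2 - ((1 - κ) / 4) * (v (x + h) - 2 * v x + v (x - h))

noncomputable def uR (κ x : ℝ) (v : ℝ → ℝ) (h : ℝ) : ℝ :=
  (v (x + h) + v x) / 2 - ((1 - κ) / 4) * (v (x + 2 * h) - 2 * v (x + h) + v x)

/-- Left-face interpolated value from the left: same formula with `x` replaced by `x - h`. -/
noncomputable def uLm (κ x : ℝ) (v : ℝ → ℝ) (h : ℝ) : ℝ := uL κ (x - h) v h

/-- Left-face interpolated value from the right: same formula with `x` replaced by `x - h`. -/
noncomputable def uRm (κ x : ℝ) (v : ℝ → ℝ) (h : ℝ) : ℝ := uR κ (x - h) v h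

/-!
The jump `uR - uL` is `(κ - 1) / 4` times the third difference
`u(x+2h) - 3u(x+h) + 3u(x) - u(x-h) = h³u''' + h⁴u''''/2 + O(h⁵)`, and the forward difference is
`u(x+h) - u(x) = hu' + h²u''/2 + h³u'''/6 + h⁴u''''/24 + O(h⁵)`; both follow from Taylor's theorem
at `x + t h` for `t ∈ {-1, 1, 2}`. Dividing by `h` leaves an `O(h⁴)` error.
-/

open Topology

theorem taylor_comp_add_mul_isBigO {E : Type*} [NormedAddCommGroup E] [NormedSpace ℝ E]
    {f : ℝ → E} {n : ℕ} (hf : ContDiff ℝ (n + 1) f) (x t : ℝ) :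
    (fun h : ℝ => f (x + t * h) - taylorWithinEval f n univ x (x + t * h))
      =O[𝓝 0] fun h : ℝ => h ^ (n + 1) := by
  have hlim : Tendsto (fun h : ℝ => x + t * h) (𝓝 0) (𝓝 x) := by
    simpa using (tendsto_id (x := 𝓝 (0:ℝ))).const_mul t |>.const_add x
  have hscale : (fun h : ℝ => (t * h) ^ (n + 1)) =O[𝓝 0] fun h : ℝ => h ^ (n + 1) := by
    simpa only [mul_pow] using
      (isBigO_refl (fun h : ℝ => h ^ (n + 1)) _).const_mul_left (t ^ (n + 1))
  have hrem : (fun h : ℝ => f (x + t * h) - taylorWithinEval f (n + 1) univ x (x + t * h))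
      =O[𝓝 0] fun h : ℝ => h ^ (n + 1) := by
    refine ((taylor_isLittleO_univ (n := n + 1) (by exact_mod_cast hf)).isBigO.comp_tendsto
      hlim).trans ?_
    simpa [Function.comp_def] using hscale
  have hterm : (fun h : ℝ => (((n + 1 : ℝ) * n.factorial)⁻¹ * (t * h) ^ (n + 1)) •
      iteratedDerivWithin (n + 1) f univ x) =O[𝓝 0] fun h : ℝ => h ^ (n + 1) := by
    have hconst : (fun _ : ℝ => iteratedDerivWithin (n + 1) f univ x)
        =O[𝓝 0] fun _ : ℝ => (1 : ℝ) :=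
      isBigO_const_const _ one_ne_zero _
    simpa using (hscale.const_mul_left _).smul hconst
  refine (hrem.add hterm).congr_left fun h => ?_
  simp only [taylorWithinEval_succ, add_sub_cancel_left, sub_add_eq_sub_sub, sub_add_cancel]

theorem taylor_four_comp_add_mul_isBigO {u : ℝ → ℝ} (hu : ContDiff ℝ 5 u) (x t : ℝ) :
    (fun h : ℝ => u (x + t * h) - (u x + t * h * deriv u x + (t * h) ^ 2 / 2 * iteratedDeriv 2 u x
      + (t * h) ^ 3 / 6 * iteratedDeriv 3 u x + (t * h) ^ 4 / 24 * iteratedDeriv 4 u x))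
      =O[𝓝 0] fun h : ℝ => h ^ 5 := by
  refine (taylor_comp_add_mul_isBigO (n := 4) hu x t).congr_left fun h => ?_
  simp only [taylor_within_apply, Finset.sum_range_succ, Finset.sum_range_zero, smul_eq_mul,
    iteratedDerivWithin_univ, iteratedDeriv_zero, iteratedDeriv_one, add_sub_cancel_left]
  norm_num [Nat.factorial]
  ring

theorem forward_difference_isBigO {u : ℝ → ℝ} (hu : ContDiff ℝ 5 u) (x : ℝ) :
    (fun h : ℝ => u (x + h) - u x - (h * deriv u x + h ^ 2 / 2 * iteratedDeriv 2 u x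
      + h ^ 3 / 6 * iteratedDeriv 3 u x + h ^ 4 / 24 * iteratedDeriv 4 u x))
      =O[𝓝 0] fun h : ℝ => h ^ 5 :=
  (taylor_four_comp_add_mul_isBigO hu x 1).congr_left fun h => by ring_nf

theorem third_difference_isBigO {u : ℝ → ℝ} (hu : ContDiff ℝ 5 u) (x : ℝ) :
    (fun h : ℝ => u (x + 2 * h) - 3 * u (x + h) + 3 * u x - u (x - h)
      - (h ^ 3 * iteratedDeriv 3 u x + h ^ 4 / 2 * iteratedDeriv 4 u x))
      =O[𝓝 0] fun h : ℝ => h ^ 5 := by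
  have htwo := taylor_four_comp_add_mul_isBigO hu x 2
  have hone := taylor_four_comp_add_mul_isBigO hu x 1
  have hneg := taylor_four_comp_add_mul_isBigO hu x (-1)
  refine ((htwo.sub (hone.const_mul_left 3)).sub hneg).congr_left fun h => ?_
  simp only [one_mul, neg_one_mul, ← sub_eq_add_neg]
  ring

theorem div_isBigO_pow_of_isBigO_pow_succ {l : Filter ℝ} {f : ℝ → ℝ} {n : ℕ}
    (hf : f =O[l] fun h : ℝ => h ^ (n + 1)) : (fun h : ℝ => f h / h) =O[l] fun h : ℝ => h ^ n := by
  have hcancel : (fun h : ℝ => h ^ (n + 1) * h⁻¹) =O[l] fun h : ℝ => h ^ n := by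
    refine IsBigO.of_bound 1 (Eventually.of_forall fun h => ?_)
    rcases eq_or_ne h 0 with rfl | hh
    · simp
    · simp [pow_succ, hh]
  simpa only [div_eq_mul_inv] using (hf.mul (isBigO_refl (fun h : ℝ => h⁻¹) l)).trans hcancel

theorem uR_sub_uL (κ x : ℝ) (v : ℝ → ℝ) (h : ℝ) :
    uR κ x v h - uL κ x v h =
      (κ - 1) / 4 * (v (x + 2 * h) - 3 * v (x + h) + 3 * v x - v (x - h)) := by
  simp only [uR, uL]
  ring

theorem quick_face_gradient_expansion_general (u : ℝ → ℝ) (hu : ContDiff ℝ 5 u)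
    (x κ α ν : ℝ) :
    (fun h : ℝ =>
        (ν * (u (x + h) - u x) / h + (ν * α / (2 * h)) * (uR κ x u h - uL κ x u h))
        - (ν * deriv u x + (ν / 2) * iteratedDeriv 2 u x * h
           + (ν / 8) * (4 / 3 + α * (κ - 1)) * iteratedDeriv 3 u x * h ^ 2
           + (ν / 48) * (2 + 3 * α * (κ - 1)) * iteratedDeriv 4 u x * h ^ 3))
      =O[nhdsWithin 0 (Set.Ioi 0)] fun h : ℝ => h ^ 4 := by
  have hforward := div_isBigO_pow_of_isBigO_pow_succ
    ((forward_difference_isBigO hu x).mono (nhdsWithin_le_nhds (s := Ioi 0)))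
  have hthird := div_isBigO_pow_of_isBigO_pow_succ
    ((third_difference_isBigO hu x).mono (nhdsWithin_le_nhds (s := Ioi 0)))
  refine ((hforward.const_mul_left ν).add (hthird.const_mul_left (ν * α * (κ - 1) / 8))).congr'
    ?_ EventuallyEq.rfl
  filter_upwards [self_mem_nhdsWithin] with h (hh : 0 < h)
  rw [uR_sub_uL]
  field_simp
  ring

theorem quick_face_gradient_expansion (u : ℝ → ℝ) (hu : ContDiff ℝ 5 u)
    (x κ α ν : ℝ) (hν : 0 < ν) :
    (fun h : ℝ =>
        (ν * (u (x + h) - u x) / h + (ν * α / (2 * h)) * (uR κ x u h - uL κ x u h))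
        - (ν * deriv u x + (ν / 2) * iteratedDeriv 2 u x * h
           + (ν / 8) * (4 / 3 + α * (κ - 1)) * iteratedDeriv 3 u x * h ^ 2
           + (ν / 48) * (2 + 3 * α * (κ - 1)) * iteratedDeriv 4 u x * h ^ 3))
      =O[nhdsWithin 0 (Set.Ioi 0)] fun h : ℝ => h ^ 4 :=
  quick_face_gradient_expansion_general u hu x κ α ν
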